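/- arXiv:2406.14743 — 2 statements merged into one kernel-verified Lean document; each statement's English description precedes it below -/
import Mathlib

section
/- Adversarial lower bound (Appendix C): Let n be a positive integer divisible by 6, and consider binary online classification with utility ψ(C) = min{C_{00}, C_{11}}, where for label sequence y ∈ {0,1}^n and prediction sequence ŷ ∈ {0,1}^n, C_{00} = (1/n)Σ_t (1−y_t)(1−ŷ_t) and C_{11} = (1/n)Σ_t y_t ŷ_t. Consider two conditional-probability sequences: η^{(1)}_t = 2/3 for all t, and η^{(2)}_t = 2/3 for t ≤ n/2 and 1/3 for t > n/2. In scenario s ∈ {1,2}, labels y_1,...,y_n are independent with P(y_t = 1) = η^{(s)}_t. Let an online algorithm produce, in scenario s, predictions ŷ^{(s)}_t ∈ {0,1} that are measurable functions of (y_1,...,y_{t−1}) and of auxiliary randomness independent of the labels, with ŷ^{(1)}_t = ŷ^{(2)}_t (as such functions) for all t ≤ n/2. Define ALG_s = E_s[min{C_{00},C_{11}}] for the algorithm's predictions and OPT_s = max over fixed prediction sequences ŷ ∈ {0,1}^n of E_s[min{C_{00},C_{11}}]. Then max_{s∈{1,2}} (OPT_s − ALG_s) ≥ 1/36 − 1/(2√n).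 -/
/-!
Scenarios are indexed by `Fin 2`: the paper's scenarios 1 and 2 are `0` and `1`. In round `t` the prediction is a function of earlier labels
and of randomness independent of them, so it is independent of `y_t`; hence for an online
algorithm `E[C_bb] = (1/n) Σ_t P(y_t = b) P(ŷ_t = b)`, and `ALG ≤ E[C_bb]` for both `b`. In the
first half the two scenarios have the same label law and the algorithm is the same, so
`q_t = P(ŷ_t = 1)` agrees there. Bounding `ALG₀` by `E[C₀₀]` and `ALG₁` by
`(2 E[C₁₁] + E[C₀₀]) / 3` eliminates the first-half `q_t` and gives `ALG₀ + ALG₁ ≤ 1/2`.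

A fixed prediction that predicts `0` in as many rounds as the expected number of positive labels
has `C₁₁ - C₀₀ = (1/n) Σ_t (y_t - η_t)`, a centred sum of independent Bernoulli variables whose
mean absolute value is at most `1/(2√n)` by Cauchy–Schwarz; as
`min {C₀₀, C₁₁} = (C₀₀ + C₁₁ - |C₁₁ - C₀₀|) / 2`, this costs at most `1/(4√n)`. Predicting `1`
on the first third (scenario 0) or on the first half (scenario 1) gives `OPT₀ ≥ 2/9 - 1/(4√n)`
and `OPT₁ ≥ 1/3 - 1/(4√n)`, so the two regrets sum to at least `1/18 - 1/(2√n)`.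
-/

open MeasureTheory

/-- Conditional probabilities of the two adversarial scenarios: in scenario `s = 0` all
rounds have `η_t = 2/3`; in scenario `s = 1` the first half has `η_t = 2/3` and the
second half `η_t = 1/3`. -/
noncomputable def advEta (n : ℕ) (s : Fin 2) (t : ℕ) : ENNReal :=
  if s = 0 ∨ t < n / 2 then 2 / 3 else 1 / 3

theorem advEta_le_one (n : ℕ) (s : Fin 2) (t : ℕ) : advEta n s t ≤ 1 := by
  unfold advEta
  split
  · exact ENNReal.div_le_of_le_mul (by norm_num)
  · exact ENNReal.div_le_of_le_mul (by norm_num)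

/-- The distribution of the label sequence in scenario `s`: labels are independent with
`P(y_t = 1) = η^{(s)}_t`. -/
noncomputable def advLabelMeasure (n : ℕ) (s : Fin 2) : Measure (Fin n → Bool) :=
  Measure.pi fun t : Fin n => (PMF.bernoulli (advEta n s t).toNNReal
    (by simpa using ENNReal.toNNReal_mono ENNReal.one_ne_top (advEta_le_one n s t))).toMeasure

/-- The utility `ψ(C) = min{C₀₀, C₁₁}` of a label sequence `y` and a prediction
sequence `ŷ`, where `C₀₀` is the fraction of true negatives and `C₁₁` the fraction of
true positives. -/
noncomputable def advUtil (n : ℕ) (y yhat : Fin n → Bool) : ℝ :=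
  min ((1 / (n : ℝ)) * ∑ t, (if y t = false ∧ yhat t = false then (1 : ℝ) else 0))
      ((1 / (n : ℝ)) * ∑ t, (if y t = true ∧ yhat t = true then (1 : ℝ) else 0))

open Finset

section ProductWeights

variable {ι α R : Type*} [Fintype ι] [DecidableEq ι] [Fintype α] [CommSemiring R]

theorem sum_prod_mul_comm_of_update_eq {β β' : ι → α → R} {t : ι}
    (hββ' : ∀ i ≠ t, β i = β' i) {G : (ι → α) → R}
    (hG : ∀ y a, G (Function.update y t a) = G y) :
    (∑ a, β t a) * ∑ y, (∏ i, β' i (y i)) * G y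
      = (∑ a, β' t a) * ∑ y, (∏ i, β i (y i)) * G y := by
  set W : (ι → α) → R := fun y => ∏ i ∈ univ.erase t, β i (y i)
  have hW : ∀ y a, W (Function.update y t a) = W y := fun y a =>
    prod_congr rfl fun i hi => by rw [Function.update_of_ne (ne_of_mem_erase hi)]
  have hsplit : ∀ γ : ι → α → R, (∀ i ≠ t, γ i = β i) →
      ∀ y, ∏ i, γ i (y i) = γ t (y t) * W y := fun γ hγ y => by
    rw [← mul_prod_erase univ _ (mem_univ t)]
    exact congrArg _ (prod_congr rfl fun i hi => by rw [hγ i (ne_of_mem_erase hi)])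
  -- resampling coordinate `t` is an involution of `α × (ι → α)` exchanging `β t` and `β' t`
  have hinv : Function.Involutive fun p : α × (ι → α) => (p.2 t, Function.update p.2 t p.1) :=
    fun p => by simp
  calc (∑ a, β t a) * ∑ y, (∏ i, β' i (y i)) * G y
      = ∑ p : α × (ι → α), β t p.1 * (β' t (p.2 t) * W p.2 * G p.2) := by
        rw [sum_mul_sum, Fintype.sum_prod_type]
        simp only [hsplit β' fun i hi => (hββ' i hi).symm]
    _ = ∑ p : α × (ι → α), β' t p.1 * (β t (p.2 t) * W p.2 * G p.2) := by
        rw [← Equiv.sum_comp (hinv.toPerm _)]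
        refine sum_congr rfl fun p _ => ?_
        simp only [Function.Involutive.coe_toPerm, Function.update_self, hW, hG]
        ring
    _ = (∑ a, β' t a) * ∑ y, (∏ i, β i (y i)) * G y := by
        rw [sum_mul_sum, Fintype.sum_prod_type]
        simp only [hsplit β fun _ _ => rfl]

theorem sum_prod_mul_mul_of_update_eq {β : ι → α → R} {t : ι} (hβ : ∑ a, β t a = 1)
    (g : α → R) {G : (ι → α) → R} (hG : ∀ y a, G (Function.update y t a) = G y) :
    ∑ y, (∏ i, β i (y i)) * (g (y t) * G y)
      = (∑ a, β t a * g a) * ∑ y, (∏ i, β i (y i)) * G y := by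
  set β' : ι → α → R := fun i a => β i a * if i = t then g a else 1
  have hβ' : ∀ y : ι → α, ∏ i, β' i (y i) = (∏ i, β i (y i)) * g (y t) := fun y => by
    rw [prod_mul_distrib, Fintype.prod_ite_eq']
  have h := sum_prod_mul_comm_of_update_eq (β := β) (β' := β') (t := t)
    (fun i hi => by simp [β', hi]) hG
  simp only [hβ, hβ', one_mul, β', if_pos] at h
  rw [← h]
  exact sum_congr rfl fun y _ => by ring

theorem sum_prod_mul_congr_of_update_eq (S : Finset ι) {β β' : ι → α → R}
    (hβ : ∀ i ∈ S, ∑ a, β i a = 1) (hβ' : ∀ i ∈ S, ∑ a, β' i a = 1)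
    (hββ' : ∀ i ∉ S, β i = β' i) {G : (ι → α) → R}
    (hG : ∀ i ∈ S, ∀ y a, G (Function.update y i a) = G y) :
    ∑ y, (∏ i, β i (y i)) * G y = ∑ y, (∏ i, β' i (y i)) * G y := by
  induction S using Finset.induction_on generalizing β' with
  | empty => rw [funext fun i => hββ' i (notMem_empty i)]
  | @insert a S haS ih =>
    set β'' := Function.update β' a (β a)
    have hS : ∀ i ∈ S, i ≠ a := fun i hi hia => haS (hia ▸ hi)
    rw [ih (β' := β'') (fun i hi => hβ i (mem_insert_of_mem hi))
      (fun i hi => by simpa [β'', hS i hi] using hβ' i (mem_insert_of_mem hi))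
      (fun i hi => by
        by_cases hia : i = a
        · subst hia; simp [β'']
        · simpa [β'', hia] using hββ' i (by simp [hia, hi]))
      (fun i hi => hG i (mem_insert_of_mem hi))]
    have h := sum_prod_mul_comm_of_update_eq (β := β'') (β' := β') (t := a)
      (fun i hi => by simp [β'', hi]) (hG a (mem_insert_self a S))
    simpa [β'', hβ a (mem_insert_self a S), hβ' a (mem_insert_self a S)] using h.symm

end ProductWeights

section Bernoulli

def bernoulliMass (p : ℝ) (b : Bool) : ℝ := if b then p else 1 - p

theorem sum_bernoulliMass (p : ℝ) : ∑ b, bernoulliMass p b = 1 := by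
  simp [bernoulliMass]

theorem bernoulliMass_nonneg {p : ℝ} (hp₀ : 0 ≤ p) (hp₁ : p ≤ 1) (b : Bool) :
    0 ≤ bernoulliMass p b := by
  cases b <;> simp [bernoulliMass, hp₀, hp₁]

theorem integral_ite_eq_bernoulliMass {Ω : Type*} [MeasurableSpace Ω] (μ : Measure Ω)
    [IsProbabilityMeasure μ] {X : Ω → Bool} (hX : Measurable X) (b : Bool) :
    ∫ ω, (if X ω = b then 1 else 0) ∂μ = bernoulliMass (∫ ω, if X ω then 1 else 0 ∂μ) b := by
  cases b
  · have hint : Integrable (fun ω => if X ω then (1 : ℝ) else 0) μ :=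
      (Integrable.of_finite (μ := μ.map X) (f := fun b : Bool => if b then (1 : ℝ) else 0)
        ).comp_measurable hX
    have h : ∀ ω, (if X ω = false then (1 : ℝ) else 0) = 1 - if X ω then 1 else 0 :=
      fun ω => by cases X ω <;> simp
    simp_rw [h]
    rw [integral_sub (integrable_const 1) hint]
    simp [bernoulliMass]
  · simp only [bernoulliMass, ↓reduceIte]

variable {ι : Type*} [Fintype ι]

def bernoulliWeight (p : ι → ℝ) (y : ι → Bool) : ℝ := ∏ i, bernoulliMass (p i) (y i)

theorem bernoulliWeight_nonneg {p : ι → ℝ} (hp : ∀ i, 0 ≤ p i ∧ p i ≤ 1) (y : ι → Bool) :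
    0 ≤ bernoulliWeight p y :=
  prod_nonneg fun i _ => bernoulliMass_nonneg (hp i).1 (hp i).2 (y i)

variable [DecidableEq ι]

theorem sum_bernoulliWeight (p : ι → ℝ) : ∑ y, bernoulliWeight p y = 1 := by
  simp only [bernoulliWeight, ← Fintype.prod_sum, sum_bernoulliMass, prod_const_one]

theorem sum_bernoulliWeight_mul_mul_of_update_eq (p : ι → ℝ) (t : ι) (g : Bool → ℝ)
    {G : (ι → Bool) → ℝ} (hG : ∀ y b, G (Function.update y t b) = G y) :
    ∑ y, bernoulliWeight p y * (g (y t) * G y)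
      = (∑ b, bernoulliMass (p t) b * g b) * ∑ y, bernoulliWeight p y * G y :=
  sum_prod_mul_mul_of_update_eq (β := fun i => bernoulliMass (p i)) (sum_bernoulliMass (p t)) g hG

theorem sum_bernoulliWeight_mul_apply (p : ι → ℝ) (t : ι) (g : Bool → ℝ) :
    ∑ y, bernoulliWeight p y * g (y t) = ∑ b, bernoulliMass (p t) b * g b := by
  simpa [sum_bernoulliWeight] using
    sum_bernoulliWeight_mul_mul_of_update_eq p t g (G := fun _ => 1) fun _ _ => rfl

theorem sum_bernoulliWeight_mul_sq_sum_sub (p : ι → ℝ) :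
    ∑ y, bernoulliWeight p y * (∑ t, ((if y t then 1 else 0) - p t)) ^ 2
      = ∑ t, p t * (1 - p t) := by
  set d : ι → Bool → ℝ := fun t b => (if b then 1 else 0) - p t
  have hcov : ∀ t u, ∑ y, bernoulliWeight p y * (d t (y t) * d u (y u))
      = if t = u then p t * (1 - p t) else 0 := by
    intro t u
    split_ifs with htu
    · subst htu
      rw [sum_bernoulliWeight_mul_apply p t fun b => d t b * d t b]
      simp only [Fintype.sum_bool, d, bernoulliMass, ↓reduceIte, Bool.false_eq_true]
      ring
    · rw [sum_bernoulliWeight_mul_mul_of_update_eq p t (d t) (G := fun y => d u (y u))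
        fun y b => by simp [Function.update_of_ne (Ne.symm htu)]]
      simp only [Fintype.sum_bool, d, bernoulliMass, ↓reduceIte, Bool.false_eq_true]
      ring
  calc ∑ y, bernoulliWeight p y * (∑ t, d t (y t)) ^ 2
      = ∑ y, ∑ t, ∑ u, bernoulliWeight p y * (d t (y t) * d u (y u)) :=
        sum_congr rfl fun y _ => by
          rw [sq, sum_mul_sum, mul_sum]
          exact sum_congr rfl fun t _ => mul_sum _ _ _
    _ = ∑ t, ∑ u, ∑ y, bernoulliWeight p y * (d t (y t) * d u (y u)) := by
        rw [sum_comm]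
        exact sum_congr rfl fun t _ => sum_comm
    _ = ∑ t, p t * (1 - p t) := by simp [hcov]

theorem sum_bernoulliWeight_mul_abs_sum_sub_le {p : ι → ℝ} (hp : ∀ i, 0 ≤ p i ∧ p i ≤ 1) :
    ∑ y, bernoulliWeight p y * |∑ t, ((if y t then 1 else 0) - p t)|
      ≤ √(Fintype.card ι) / 2 := by
  set X : (ι → Bool) → ℝ := fun y => ∑ t, ((if y t then 1 else 0) - p t)
  have hw := bernoulliWeight_nonneg hp
  have hCS : (∑ y, bernoulliWeight p y * |X y|) ^ 2
      ≤ (∑ y, bernoulliWeight p y) * ∑ y, bernoulliWeight p y * X y ^ 2 :=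
    sum_sq_le_sum_mul_sum_of_sq_le_mul _ (fun y _ => hw y)
      (fun y _ => mul_nonneg (hw y) (sq_nonneg _))
      fun y _ => le_of_eq (by rw [mul_pow, sq_abs]; ring)
  have hvar : ∑ t, p t * (1 - p t) ≤ Fintype.card ι / 4 := by
    refine (sum_le_sum fun t _ => show p t * (1 - p t) ≤ 1 / 4 by
      nlinarith [sq_nonneg (p t - 1 / 2)]).trans_eq ?_
    simp [div_eq_mul_inv]
  rw [sum_bernoulliWeight, one_mul, sum_bernoulliWeight_mul_sq_sum_sub] at hCS
  rw [show √(Fintype.card ι : ℝ) / 2 = √(Fintype.card ι / 4) by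
    rw [Real.sqrt_div' _ (by norm_num : (0 : ℝ) ≤ 4), show (4 : ℝ) = 2 ^ 2 by norm_num,
      Real.sqrt_sq (by norm_num)]]
  exact Real.le_sqrt_of_sq_le (hCS.trans hvar)

end Bernoulli

theorem sum_fin_ite_val_lt {n k : ℕ} (hk : k ≤ n) (a b : ℝ) :
    ∑ t : Fin n, (if (t : ℕ) < k then a else b) = k * a + (n - k) * b := by
  obtain ⟨d, rfl⟩ := Nat.exists_eq_add_of_le hk
  rw [Fin.sum_univ_eq_sum_range (fun i => if i < k then a else b), sum_range_add,
    sum_congr rfl fun i hi => if_pos (mem_range.mp hi),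
    sum_congr rfl fun i _ => if_neg (by omega)]
  simp

theorem one_div_mul_sum_fin_ite_lt_half {n : ℕ} (hn : 0 < n) (heven : Even n) (a b : ℝ) :
    1 / (n : ℝ) * ∑ t : Fin n, (if (t : ℕ) < n / 2 then a else b) = (a + b) / 2 := by
  obtain ⟨k, rfl⟩ := heven
  have hk : (k : ℝ) ≠ 0 := by exact_mod_cast (by omega : k ≠ 0)
  rw [sum_fin_ite_val_lt (Nat.div_le_self _ 2), show (k + k) / 2 = k by omega]
  push_cast
  field_simp
  ring

section Labels

noncomputable def advProb (n : ℕ) (s : Fin 2) (t : Fin n) : ℝ := (advEta n s t).toReal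

theorem advProb_eq (n : ℕ) (s : Fin 2) (t : Fin n) :
    advProb n s t = if s = 0 ∨ (t : ℕ) < n / 2 then 2 / 3 else 1 / 3 := by
  unfold advProb advEta
  split_ifs <;> simp [ENNReal.toReal_div]

theorem advProb_mem (n : ℕ) (s : Fin 2) (t : Fin n) :
    0 ≤ advProb n s t ∧ advProb n s t ≤ 1 := by
  rw [advProb_eq]
  split_ifs <;> norm_num

instance (n : ℕ) (s : Fin 2) : IsProbabilityMeasure (advLabelMeasure n s) := by
  unfold advLabelMeasure
  infer_instance

set_option linter.deprecated false in
theorem measureReal_advLabelMeasure_singleton (n : ℕ) (s : Fin 2) (y : Fin n → Bool) :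
    (advLabelMeasure n s).real {y} = bernoulliWeight (advProb n s) y := by
  rw [measureReal_def, advLabelMeasure, ← Set.univ_pi_singleton y, Measure.pi_pi,
    ENNReal.toReal_prod]
  refine prod_congr rfl fun t _ => ?_
  rw [PMF.toMeasure_apply_singleton _ _ (measurableSet_singleton _)]
  erw [PMF.bernoulli_apply]
  have hle := advEta_le_one n s t
  cases y t
  · simp [bernoulliMass, advProb, ENNReal.toReal_sub_of_le hle ENNReal.one_ne_top,
      ENNReal.coe_toNNReal (ne_top_of_le_ne_top ENNReal.one_ne_top hle)]
  · simp [bernoulliMass, advProb, ENNReal.coe_toNNReal_eq_toReal]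

theorem integral_advLabelMeasure (n : ℕ) (s : Fin 2) (f : (Fin n → Bool) → ℝ) :
    ∫ y, f y ∂advLabelMeasure n s = ∑ y, bernoulliWeight (advProb n s) y * f y := by
  simp [integral_fintype Integrable.of_finite, measureReal_advLabelMeasure_singleton]

variable {n : ℕ} {Ω : Type*} [MeasurableSpace Ω] (ν : Measure Ω) [SFinite ν]

theorem integral_advLabelMeasure_prod (s : Fin 2) {F : (Fin n → Bool) × Ω → ℝ}
    (hF : Integrable F ((advLabelMeasure n s).prod ν)) :
    ∫ p, F p ∂(advLabelMeasure n s).prod ν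
      = ∑ y, bernoulliWeight (advProb n s) y * ∫ ω, F (y, ω) ∂ν := by
  rw [integral_prod F hF, integral_advLabelMeasure]

theorem integral_advLabelMeasure_prod_eq_of_firstHalf {F : (Fin n → Bool) × Ω → ℝ}
    (hF₀ : Integrable F ((advLabelMeasure n 0).prod ν))
    (hF₁ : Integrable F ((advLabelMeasure n 1).prod ν))
    (hF : ∀ y y' ω, (∀ i : Fin n, (i : ℕ) < n / 2 → y i = y' i) → F (y, ω) = F (y', ω)) :
    ∫ p, F p ∂(advLabelMeasure n 0).prod ν = ∫ p, F p ∂(advLabelMeasure n 1).prod ν := by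
  rw [integral_advLabelMeasure_prod ν 0 hF₀, integral_advLabelMeasure_prod ν 1 hF₁]
  refine sum_prod_mul_congr_of_update_eq (univ.filter fun i : Fin n => n / 2 ≤ (i : ℕ))
    (fun i _ => sum_bernoulliMass _) (fun i _ => sum_bernoulliMass _)
    (fun i hi => by simp_all [advProb_eq]) fun i hi y a => ?_
  have hy : ∀ ω, F (Function.update y i a, ω) = F (y, ω) := fun ω =>
    hF _ _ ω fun j hj => Function.update_of_ne (by rintro rfl; simp at hi; omega) _ _
  simp only [hy]

end Labels

noncomputable def confusionEntry (n : ℕ) (b : Bool) (y yhat : Fin n → Bool) : ℝ :=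
  (1 / (n : ℝ)) * ∑ t, if y t = b ∧ yhat t = b then 1 else 0

theorem advUtil_le_confusionEntry (n : ℕ) (b : Bool) (y yhat : Fin n → Bool) :
    advUtil n y yhat ≤ confusionEntry n b y yhat := by
  cases b
  exacts [min_le_left _ _, min_le_right _ _]

section Online

variable {n : ℕ} {Ω : Type*} [MeasurableSpace Ω] {ν : Measure Ω}

structure IsOnlinePredictor (B : Fin n → (Fin n → Bool) → Ω → Bool) : Prop where
  measurable : ∀ t, Measurable fun p : (Fin n → Bool) × Ω => B t p.1 p.2
  adapted : ∀ t y y' ω, (∀ i : Fin n, i < t → y i = y' i) → B t y ω = B t y' ω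

variable {B : Fin n → (Fin n → Bool) → Ω → Bool}

theorem IsOnlinePredictor.integrable_comp [IsFiniteMeasure ν] (hB : IsOnlinePredictor B)
    (s : Fin 2) (Φ : (Fin n → Bool) → (Fin n → Bool) → ℝ) :
    Integrable (fun p => Φ p.1 fun t => B t p.1 p.2) ((advLabelMeasure n s).prod ν) :=
  (Integrable.of_finite (f := Function.uncurry Φ)).comp_measurable
    (measurable_fst.prodMk (measurable_pi_lambda _ hB.measurable))

theorem IsOnlinePredictor.integral_label_mul_prediction [IsFiniteMeasure ν]
    (hB : IsOnlinePredictor B) (s : Fin 2) (t : Fin n) (g h : Bool → ℝ) :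
    ∫ p, g (p.1 t) * h (B t p.1 p.2) ∂(advLabelMeasure n s).prod ν
      = (∑ b, bernoulliMass (advProb n s t) b * g b)
        * ∫ p, h (B t p.1 p.2) ∂(advLabelMeasure n s).prod ν := by
  rw [integral_advLabelMeasure_prod ν s (F := fun p => g (p.1 t) * h (B t p.1 p.2))
      (hB.integrable_comp s fun y yhat => g (y t) * h (yhat t)),
    integral_advLabelMeasure_prod ν s (F := fun p => h (B t p.1 p.2))
      (hB.integrable_comp s fun _ yhat => h (yhat t))]
  simp_rw [integral_const_mul]
  refine sum_bernoulliWeight_mul_mul_of_update_eq _ t g fun y b => ?_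
  have hy : ∀ ω, B t (Function.update y t b) ω = B t y ω :=
    fun ω => hB.adapted t _ y ω fun i hi => Function.update_of_ne hi.ne _ _
  simp only [hy]

theorem IsOnlinePredictor.integral_confusionEntry [IsFiniteMeasure ν]
    (hB : IsOnlinePredictor B) (s : Fin 2) (b : Bool) :
    ∫ p, confusionEntry n b p.1 (fun t => B t p.1 p.2) ∂(advLabelMeasure n s).prod ν
      = (1 / (n : ℝ)) * ∑ t, bernoulliMass (advProb n s t) b
        * ∫ p, (if B t p.1 p.2 = b then 1 else 0) ∂(advLabelMeasure n s).prod ν := by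
  unfold confusionEntry
  rw [integral_const_mul, integral_finsetSum _ fun t _ =>
    hB.integrable_comp s fun y yhat => if y t = b ∧ yhat t = b then (1 : ℝ) else 0]
  congr 1
  refine sum_congr rfl fun t _ => ?_
  have hsplit : ∀ p : (Fin n → Bool) × Ω,
      (if p.1 t = b ∧ B t p.1 p.2 = b then (1 : ℝ) else 0)
        = (if p.1 t = b then 1 else 0) * if B t p.1 p.2 = b then 1 else 0 :=
    fun p => by rw [ite_zero_mul_ite_zero, one_mul]
  simp_rw [hsplit]
  rw [hB.integral_label_mul_prediction s t (fun a => if a = b then 1 else 0)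
    fun a => if a = b then 1 else 0]
  simp

theorem IsOnlinePredictor.integral_advUtil_le [IsProbabilityMeasure ν]
    (hB : IsOnlinePredictor B) (s : Fin 2) (b : Bool) :
    ∫ p, advUtil n p.1 (fun t => B t p.1 p.2) ∂(advLabelMeasure n s).prod ν
      ≤ (1 / (n : ℝ)) * ∑ t, bernoulliMass (advProb n s t) b * bernoulliMass
        (∫ p, (if B t p.1 p.2 then 1 else 0) ∂(advLabelMeasure n s).prod ν) b := by
  simp_rw [← integral_ite_eq_bernoulliMass _ (hB.measurable _) b, ← hB.integral_confusionEntry]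
  exact integral_mono (hB.integrable_comp s _) (hB.integrable_comp s _)
    fun p => advUtil_le_confusionEntry n b _ _

theorem IsOnlinePredictor.integral_prediction_eq_of_lt_half [IsFiniteMeasure ν]
    (hB : IsOnlinePredictor B) {t : Fin n} (ht : (t : ℕ) < n / 2) :
    ∫ p, (if B t p.1 p.2 then (1 : ℝ) else 0) ∂(advLabelMeasure n 0).prod ν
      = ∫ p, (if B t p.1 p.2 then 1 else 0) ∂(advLabelMeasure n 1).prod ν := by
  refine integral_advLabelMeasure_prod_eq_of_firstHalf ν
    (F := fun p => if B t p.1 p.2 then 1 else 0)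
    (hB.integrable_comp 0 fun _ yhat => if yhat t then 1 else 0)
    (hB.integrable_comp 1 fun _ yhat => if yhat t then 1 else 0) fun y y' ω hyy' => ?_
  simp only [hB.adapted t y y' ω fun i hi => hyy' i (lt_trans hi ht)]

end Online

theorem integral_advUtil_add_le_half {n : ℕ} (hn : 0 < n) (heven : Even n) {Ω : Type*}
    [MeasurableSpace Ω] (ν : Measure Ω) [IsProbabilityMeasure ν]
    {A : Fin 2 → Fin n → (Fin n → Bool) → Ω → Bool} (hA : ∀ s, IsOnlinePredictor (A s))
    (hsame : ∀ t : Fin n, (t : ℕ) < n / 2 → A 0 t = A 1 t) :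
    ∫ p, advUtil n p.1 (fun t => A 0 t p.1 p.2) ∂(advLabelMeasure n 0).prod ν
      + ∫ p, advUtil n p.1 (fun t => A 1 t p.1 p.2) ∂(advLabelMeasure n 1).prod ν ≤ 1 / 2 := by
  have h₀ := (hA 0).integral_advUtil_le (ν := ν) 0 false
  have h₁ := (hA 1).integral_advUtil_le (ν := ν) 1 true
  have h₁' := (hA 1).integral_advUtil_le (ν := ν) 1 false
  set q : Fin 2 → Fin n → ℝ := fun s t =>
    ∫ p, (if A s t p.1 p.2 then 1 else 0) ∂(advLabelMeasure n s).prod ν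
  have hq₀ : ∀ t, 0 ≤ q 0 t := fun t => integral_nonneg fun p => by split_ifs <;> norm_num
  have hq : ∀ t : Fin n, (t : ℕ) < n / 2 → q 0 t = q 1 t := fun t ht => by
    simp only [q, hsame t ht]
    exact (hA 1).integral_prediction_eq_of_lt_half ht
  -- weighting the two bounds of scenario 1 by 2/3 and 1/3 cancels `q 1 t` on the first half
  have hpt : ∀ t : Fin n, bernoulliMass (advProb n 0 t) false * bernoulliMass (q 0 t) false
      + 2 / 3 * (bernoulliMass (advProb n 1 t) true * bernoulliMass (q 1 t) true)
      + 1 / 3 * (bernoulliMass (advProb n 1 t) false * bernoulliMass (q 1 t) false)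
      ≤ if (t : ℕ) < n / 2 then 4 / 9 else 5 / 9 := fun t => by
    by_cases ht : (t : ℕ) < n / 2
    · simp only [bernoulliMass, advProb_eq, hq t ht, ht]
      norm_num
      linarith
    · simp only [bernoulliMass, advProb_eq, ht]
      norm_num
      linarith [hq₀ t]
  have hsum := mul_le_mul_of_nonneg_left (sum_le_sum fun t (_ : t ∈ univ) => hpt t)
    (one_div_nonneg.mpr (Nat.cast_nonneg (α := ℝ) n))
  rw [one_div_mul_sum_fin_ite_lt_half hn heven, sum_add_distrib, sum_add_distrib, ← mul_sum,
    ← mul_sum] at hsum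
  linarith

section Benchmark

variable {n : ℕ}

theorem advUtil_eq_of_balanced (p : Fin n → ℝ) (y yhat : Fin n → Bool)
    (hbal : ∑ t, (if yhat t then 0 else 1) = ∑ t, p t) :
    advUtil n y yhat = 1 / (2 * n) *
      ((∑ t, if y t = yhat t then 1 else 0) - |∑ t, ((if y t then 1 else 0) - p t)|) := by
  set C₀ := confusionEntry n false y yhat
  set C₁ := confusionEntry n true y yhat
  have hadd : C₀ + C₁ = 1 / n * ∑ t, if y t = yhat t then 1 else 0 := by
    simp only [C₀, C₁, confusionEntry]
    rw [← mul_add, ← sum_add_distrib]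
    congr 1
    refine sum_congr rfl fun t _ => ?_
    cases y t <;> cases yhat t <;> simp
  have hsub : C₁ - C₀ = 1 / n * ∑ t, ((if y t then 1 else 0) - p t) := by
    simp only [C₀, C₁, confusionEntry]
    rw [← mul_sub, sum_sub_distrib (g := p), ← hbal, ← sum_sub_distrib, ← sum_sub_distrib]
    congr 1
    refine sum_congr rfl fun t _ => ?_
    cases y t <;> cases yhat t <;> simp
  have hmin : 2 * advUtil n y yhat = C₀ + C₁ - |C₁ - C₀| := by
    rw [← two_nsmul_inf_eq_add_sub_abs_sub, two_nsmul, two_mul]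
    rfl
  rw [hadd, hsub, abs_mul, abs_of_nonneg (by positivity)] at hmin
  linear_combination hmin / 2

theorem sum_bernoulliWeight_mul_advUtil_ge (hn : 0 < n) {p : Fin n → ℝ}
    (hp : ∀ t, 0 ≤ p t ∧ p t ≤ 1) (yhat : Fin n → Bool)
    (hbal : ∑ t, (if yhat t then 0 else 1) = ∑ t, p t) :
    1 / (2 * n) * ∑ t, bernoulliMass (p t) (yhat t) - 1 / (4 * √n)
      ≤ ∑ y, bernoulliWeight p y * advUtil n y yhat := by
  have hmatch : ∑ y, bernoulliWeight p y * ∑ t, (if y t = yhat t then 1 else 0)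
      = ∑ t, bernoulliMass (p t) (yhat t) := by
    simp_rw [mul_sum]
    rw [sum_comm]
    refine sum_congr rfl fun t _ => ?_
    rw [sum_bernoulliWeight_mul_apply p t fun b => if b = yhat t then 1 else 0]
    simp
  have hdev := sum_bernoulliWeight_mul_abs_sum_sub_le hp
  rw [Fintype.card_fin] at hdev
  have hscale : 1 / (2 * (n : ℝ)) * (√n / 2) = 1 / (4 * √n) := by
    have h : (0 : ℝ) < √n := Real.sqrt_pos.mpr (by exact_mod_cast hn)
    field_simp
    rw [Real.sq_sqrt n.cast_nonneg]
    ring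
  calc 1 / (2 * n) * ∑ t, bernoulliMass (p t) (yhat t) - 1 / (4 * √n)
      = 1 / (2 * n) * (∑ t, bernoulliMass (p t) (yhat t) - √n / 2) := by rw [mul_sub, hscale]
    _ ≤ 1 / (2 * n) * (∑ y, bernoulliWeight p y * ∑ t, (if y t = yhat t then 1 else 0)
          - ∑ y, bernoulliWeight p y * |∑ t, ((if y t then 1 else 0) - p t)|) := by
        rw [hmatch]
        gcongr
    _ = ∑ y, bernoulliWeight p y * advUtil n y yhat := by
        rw [← sum_sub_distrib, mul_sum]
        exact sum_congr rfl fun y _ => by rw [advUtil_eq_of_balanced p y yhat hbal]; ring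

theorem iSup_integral_advUtil_zero_ge {m : ℕ} (hnm : n = 6 * m) (hm : 0 < m) :
    2 / 9 - 1 / (4 * √n)
      ≤ ⨆ yhat : Fin n → Bool, ∫ y, advUtil n y yhat ∂advLabelMeasure n 0 := by
  refine le_ciSup_of_le (Set.finite_range _).bddAbove (fun t => decide ((t : ℕ) < 2 * m)) ?_
  rw [integral_advLabelMeasure]
  have hn : 0 < n := by omega
  refine le_of_eq_of_le ?_ (sum_bernoulliWeight_mul_advUtil_ge hn (advProb_mem n 0) _ ?_)
  · simp only [advProb_eq, bernoulliMass, decide_eq_true_eq, true_or, ↓reduceIte]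
    rw [sum_fin_ite_val_lt (by omega), hnm]
    push_cast
    field_simp
    ring
  · simp only [advProb_eq, decide_eq_true_eq, true_or, ↓reduceIte]
    rw [sum_fin_ite_val_lt (by omega), sum_const, card_univ, Fintype.card_fin, hnm]
    simp
    ring

theorem iSup_integral_advUtil_one_ge {m : ℕ} (hnm : n = 6 * m) (hm : 0 < m) :
    1 / 3 - 1 / (4 * √n)
      ≤ ⨆ yhat : Fin n → Bool, ∫ y, advUtil n y yhat ∂advLabelMeasure n 1 := by
  have hhalf : n / 2 = 3 * m := by omega
  refine le_ciSup_of_le (Set.finite_range _).bddAbove (fun t => decide ((t : ℕ) < 3 * m)) ?_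
  rw [integral_advLabelMeasure]
  have hn : 0 < n := by omega
  refine le_of_eq_of_le ?_ (sum_bernoulliWeight_mul_advUtil_ge hn (advProb_mem n 1) _ ?_)
  · have h : ∀ t : Fin n, bernoulliMass (advProb n 1 t) (decide ((t : ℕ) < 3 * m)) = 2 / 3 :=
      fun t => by
        by_cases ht : (t : ℕ) < 3 * m
        · simp [advProb_eq, bernoulliMass, hhalf, ht]
        · simp [advProb_eq, bernoulliMass, hhalf, ht]
          norm_num
    simp only [h, sum_const, card_univ, Fintype.card_fin, nsmul_eq_mul]
    field_simp
  · simp only [advProb_eq, decide_eq_true_eq, hhalf, show (1 : Fin 2) ≠ 0 by decide, false_or]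
    rw [sum_fin_ite_val_lt (by omega), sum_fin_ite_val_lt (by omega), hnm]
    push_cast
    ring

end Benchmark

/-- Adversarial lower bound: for `n` divisible by 6, any online algorithm (predictions
measurable in past labels and in auxiliary randomness independent of the labels, and
identical in both scenarios during the first half) suffers, in one of the two scenarios,
a regret of at least `1/36 - 1/(2√n)` for the utility `min{C₀₀, C₁₁}` against the best
fixed prediction sequence in expectation. -/
theorem adversarial_lower_bound
    (n : ℕ) (hn : 0 < n) (h6 : 6 ∣ n)
    {Ωa : Type*} [MeasurableSpace Ωa] (ν : Measure Ωa) [IsProbabilityMeasure ν]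
    (A : Fin 2 → Fin n → (Fin n → Bool) → Ωa → Bool)
    (hmeas : ∀ s t, Measurable (fun p : (Fin n → Bool) × Ωa => A s t p.1 p.2))
    (hadapt : ∀ s t yseq yseq' a,
      (∀ i : Fin n, i < t → yseq i = yseq' i) → A s t yseq a = A s t yseq' a)
    (hsame : ∀ t : Fin n, (t : ℕ) < n / 2 → A 0 t = A 1 t)
    (ALG : Fin 2 → ℝ)
    (hALG : ∀ s, ALG s =
      ∫ p, advUtil n p.1 (fun t => A s t p.1 p.2) ∂((advLabelMeasure n s).prod ν))
    (OPT : Fin 2 → ℝ)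
    (hOPT : ∀ s, OPT s =
      ⨆ yhat : Fin n → Bool, ∫ y, advUtil n y yhat ∂(advLabelMeasure n s)) :
    1 / 36 - 1 / (2 * Real.sqrt n) ≤ max (OPT 0 - ALG 0) (OPT 1 - ALG 1) := by
  obtain ⟨m, hm⟩ := h6
  have hALG' : ALG 0 + ALG 1 ≤ 1 / 2 := by
    rw [hALG 0, hALG 1]
    exact integral_advUtil_add_le_half hn ⟨3 * m, by omega⟩ ν
      (fun s => ⟨hmeas s, hadapt s⟩) hsame
  have hOPT₀ : 2 / 9 - 1 / (4 * √n) ≤ OPT 0 :=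
    (hOPT 0).symm ▸ iSup_integral_advUtil_zero_ge hm (by omega)
  have hOPT₁ : 1 / 3 - 1 / (4 * √n) ≤ OPT 1 :=
    (hOPT 1).symm ▸ iSup_integral_advUtil_one_ge hm (by omega)
  have hsqrt : 0 < √(n : ℝ) := Real.sqrt_pos.mpr (by exact_mod_cast hn)
  have hε : 1 / (4 * √n) ≤ 1 / (2 * √n) :=
    one_div_le_one_div_of_le (by positivity) (by linarith)
  linarith [le_max_left (OPT 0 - ALG 0) (OPT 1 - ALG 1),
    le_max_right (OPT 0 - ALG 0) (OPT 1 - ALG 1)]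
end

section
/- Nice-sequence lemma (Lemma in Appendix E): Let y₁,...,y_n be i.i.d. random vectors with values in {0,1}^m, let p*_k = P(y_{1,k} = 1) for k = 1,...,m, and let γ* = min_k p*_k > 0. Let n₀ be a positive integer dividing n with n₀² ≥ n. Then with probability at least 1 − m·n₀·e^{−γ*²·n₀/2}, the sequence is (n₀, γ*/4)-nice, i.e., for every t with n₀ < t ≤ n and every k ∈ {1,...,m}, the running average satisfies (1/t)·Σ_{i=1}^t y_{i,k} ≥ γ*/4. -/
/-!
Split `[1, n]` into the `n / n₀ ≤ n₀` blocks ending at the multiples `j n₀` of `n₀`. For every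
block end `N = j n₀` and every coordinate `k`, Hoeffding's inequality bounds the probability
that the prefix sum up to `N` drops to `γ N / 2`, at most half its mean, by `exp (-γ² N / 2)`, and
`N ≥ n₀`. Outside the union of these `m n₀` events every running average is large: rounding
`t > n₀` down to a multiple `r` of `n₀` loses at most half, since `r ≤ t < 2 r` and the prefix
sums are monotone.
-/

open MeasureTheory ProbabilityTheory Finset

lemma half_mul_le_of_le_at_floor {S : ℕ → ℝ} (hS : Monotone S) {β : ℝ} (hβ : 0 ≤ β)
    {n₀ t : ℕ} (hn₀ : 0 < n₀) (ht : n₀ ≤ t)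
    (hfloor : β * (t / n₀ * n₀ : ℕ) ≤ S (t / n₀ * n₀)) : β / 2 * t ≤ S t := by
  set r := t / n₀ * n₀
  have hrt : r ≤ t := Nat.div_mul_le_self t n₀
  have htr : t ≤ 2 * r := by
    have hn₀r : n₀ ≤ r := Nat.le_mul_of_pos_left n₀ ((Nat.one_le_div_iff hn₀).mpr ht)
    have := Nat.div_add_mod' t n₀
    have := Nat.mod_lt t hn₀
    omega
  calc β / 2 * t ≤ β * r := by
        have : (t : ℝ) ≤ 2 * r := by exact_mod_cast htr
        nlinarith
    _ ≤ S r := hfloor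
    _ ≤ S t := hS hrt

lemma monotone_sum_filter_val_lt {n : ℕ} {a : Fin n → ℝ} (ha : ∀ i, 0 ≤ a i) :
    Monotone fun t : ℕ ↦ ∑ i ∈ univ.filter (fun i : Fin n => (i : ℕ) < t), a i :=
  fun _ _ hst ↦ sum_le_sum_of_subset_of_nonneg
    (monotone_filter_right _ fun _ _ hi ↦ hi.trans_le hst) fun i _ _ ↦ ha i

lemma half_le_average_of_le_at_floor {n n₀ t : ℕ} {a : Fin n → ℝ} (ha : ∀ i, 0 ≤ a i)
    {β : ℝ} (hβ : 0 ≤ β) (hn₀ : 0 < n₀) (ht : n₀ ≤ t)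
    (hfloor : β * (t / n₀ * n₀ : ℕ) ≤
      ∑ i ∈ univ.filter (fun i : Fin n => (i : ℕ) < t / n₀ * n₀), a i) :
    β / 2 ≤ 1 / (t : ℝ) * ∑ i ∈ univ.filter (fun i : Fin n => (i : ℕ) < t), a i := by
  have := half_mul_le_of_le_at_floor (monotone_sum_filter_val_lt ha) hβ hn₀ ht hfloor
  have htpos : (0 : ℝ) < t := by exact_mod_cast hn₀.trans_le ht
  rw [one_div, inv_mul_eq_div, le_div_iff₀ htpos]
  exact this

section Probability

variable {Ω : Type*} [MeasurableSpace Ω] {μ : Measure Ω}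

lemma one_sub_card_mul_le_measureReal [IsProbabilityMeasure μ] {ι : Type*} (J : Finset ι)
    {B : ι → Set Ω} {G : Set Ω} {c : ℝ} (hB : ∀ j ∈ J, μ.real (B j) ≤ c)
    (hG : (⋃ j ∈ J, B j)ᶜ ⊆ G) : 1 - #J * c ≤ μ.real G := by
  have hunion : μ.real (⋃ j ∈ J, B j) ≤ #J * c := by
    simpa only [nsmul_eq_mul] using
      (measureReal_biUnion_finset_le J B).trans (sum_le_card_nsmul J _ _ hB)
  have hcover : Set.univ ⊆ (⋃ j ∈ J, B j) ∪ G := fun ω _ ↦ or_iff_not_imp_left.mpr (hG ·)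
  have := (measureReal_mono hcover (measure_ne_top μ _)).trans (measureReal_union_le _ _)
  rw [probReal_univ] at this
  linarith

lemma integral_eq_measureReal_of_eq_zero_or_eq_one {f : Ω → ℝ} (hf : Measurable f)
    (h01 : ∀ ω, f ω = 0 ∨ f ω = 1) : μ[f] = μ.real {ω | f ω = 1} := by
  have hind : f = Set.indicator {ω | f ω = 1} 1 := by
    funext ω
    rcases h01 ω with h | h <;> simp [Set.indicator, h]
  conv_lhs => rw [hind]
  exact integral_indicator_one (hf (measurableSet_singleton 1))

lemma measureReal_sum_le_sub_le_of_mem_Icc {ι : Type*} [IsProbabilityMeasure μ]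
    {X : ι → Ω → ℝ} (hindep : iIndepFun X μ) (hmeas : ∀ i, Measurable (X i))
    (hX : ∀ i ω, X i ω ∈ Set.Icc (0 : ℝ) 1) (s : Finset ι) {ε : ℝ} (hε : 0 ≤ ε) :
    μ.real {ω | ∑ i ∈ s, X i ω ≤ ∑ i ∈ s, μ[X i] - ε} ≤ Real.exp (-2 * ε ^ 2 / #s) := by
  have hsubG : ∀ i ∈ s, HasSubgaussianMGF (fun ω ↦ μ[X i] - X i ω) ((1 / 2) ^ 2) μ := by
    intro i _
    have := (hasSubgaussianMGF_of_mem_Icc (hmeas i).aemeasurable (ae_of_all μ (hX i))).neg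
    convert! this using 2 <;> simp
  have hindep' : iIndepFun (fun i ω ↦ μ[X i] - X i ω) μ :=
    hindep.comp (fun i (x : ℝ) ↦ (∫ ω, X i ω ∂μ) - x) fun _ ↦ measurable_const.sub measurable_id
  convert HasSubgaussianMGF.measure_sum_ge_le_of_iIndepFun hindep' hsubG hε using 2
  · ext ω
    simp only [Set.mem_ofPred_eq, sum_sub_distrib]
    constructor <;> intro h <;> linarith
  · simp only [sum_const, nsmul_eq_mul]
    push_cast
    ring

lemma measureReal_sum_le_half_mul_card_le {ι : Type*} [IsProbabilityMeasure μ]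
    {X : ι → Ω → ℝ} (hindep : iIndepFun X μ) (hmeas : ∀ i, Measurable (X i))
    (hX : ∀ i ω, X i ω ∈ Set.Icc (0 : ℝ) 1) (s : Finset ι) {γ : ℝ} (hγ : 0 ≤ γ)
    (hmean : ∀ i ∈ s, γ ≤ μ[X i]) :
    μ.real {ω | ∑ i ∈ s, X i ω ≤ γ / 2 * #s} ≤ Real.exp (-γ ^ 2 * #s / 2) := by
  set ε := ∑ i ∈ s, μ[X i] - γ / 2 * #s with hε_def
  have hε : γ / 2 * #s ≤ ε := by
    have := sum_le_sum hmean
    simp only [sum_const, nsmul_eq_mul] at this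
    linarith
  have hε0 : 0 ≤ γ / 2 * #s := by positivity
  calc μ.real {ω | ∑ i ∈ s, X i ω ≤ γ / 2 * #s}
      = μ.real {ω | ∑ i ∈ s, X i ω ≤ ∑ i ∈ s, μ[X i] - ε} := by simp only [ε, sub_sub_cancel]
    _ ≤ Real.exp (-2 * ε ^ 2 / #s) :=
        measureReal_sum_le_sub_le_of_mem_Icc hindep hmeas hX s (hε0.trans hε)
    _ ≤ Real.exp (-γ ^ 2 * #s / 2) := by
        refine Real.exp_le_exp.mpr ?_
        rcases (Nat.cast_nonneg (α := ℝ) #s).eq_or_lt with hs | hs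
        · simp [← hs]
        · rw [div_le_div_iff₀ hs two_pos]
          nlinarith [pow_le_pow_left₀ hε0 hε 2]

lemma measureReal_prefix_sum_le_half_mul_le {n : ℕ} [IsProbabilityMeasure μ] {y : Fin n → Ω → ℝ}
    (hindep : iIndepFun y μ) (hmeas : ∀ i, Measurable (y i))
    (h01 : ∀ i ω, y i ω = 0 ∨ y i ω = 1) {γ : ℝ} (hγ : 0 ≤ γ)
    (hprob : ∀ i, γ ≤ μ.real {ω | y i ω = 1}) {n₀ N : ℕ} (hN₀ : n₀ ≤ N) (hN : N ≤ n) :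
    μ.real {ω | ∑ i ∈ univ.filter (fun i : Fin n => (i : ℕ) < N), y i ω ≤ γ / 2 * N}
      ≤ Real.exp (-γ ^ 2 * n₀ / 2) := by
  have hcard : #(univ.filter (fun i : Fin n => (i : ℕ) < N)) = N := by
    rw [Fin.card_filter_val_lt, min_eq_right hN]
  have hX : ∀ i ω, y i ω ∈ Set.Icc (0 : ℝ) 1 := fun i ω ↦ by
    rcases h01 i ω with h | h <;> simp [h]
  have hmean : ∀ i ∈ univ.filter (fun i : Fin n => (i : ℕ) < N), γ ≤ μ[y i] := fun i _ ↦ by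
    rw [integral_eq_measureReal_of_eq_zero_or_eq_one (hmeas i) (h01 i)]
    exact hprob i
  have := measureReal_sum_le_half_mul_card_le hindep hmeas hX _ hγ hmean
  rw [hcard] at this
  refine this.trans (Real.exp_le_exp.mpr ?_)
  have : (n₀ : ℝ) ≤ N := by exact_mod_cast hN₀
  nlinarith [sq_nonneg γ]

end Probability

theorem nice_sequence_lemma_general
    {Ω : Type*} [MeasurableSpace Ω] (μ : Measure Ω) [IsProbabilityMeasure μ]
    (n m : ℕ)
    (y : Fin n → Ω → (Fin m → ℝ))
    (hmeas : ∀ i, Measurable (y i))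
    (h01 : ∀ i ω k, y i ω k = 0 ∨ y i ω k = 1)
    (hindep : iIndepFun y μ)
    (p : Fin m → ℝ)
    (hp : ∀ (i : Fin n) (k : Fin m), (μ {ω | y i ω k = 1}).toReal = p k)
    (γ : ℝ) (hγ : γ = ⨅ k, p k) (hγpos : 0 < γ)
    (n₀ : ℕ) (hn₀pos : 0 < n₀) (hn₀sq : n ≤ n₀ ^ 2) :
    1 - (m : ℝ) * n₀ * Real.exp (-γ ^ 2 * n₀ / 2) ≤
      (μ {ω | ∀ t : ℕ, n₀ < t → t ≤ n → ∀ k : Fin m,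
        γ / 4 ≤ (1 / (t : ℝ)) * ∑ i ∈ Finset.univ.filter (fun i : Fin n => (i : ℕ) < t),
          y i ω k}).toReal := by
  set J := Icc 1 (n / n₀) ×ˢ (univ : Finset (Fin m))
  set Bad : ℕ × Fin m → Set Ω := fun jk ↦ {ω |
    ∑ i ∈ univ.filter (fun i : Fin n => (i : ℕ) < jk.1 * n₀), y i ω jk.2 ≤ γ / 2 * (jk.1 * n₀ : ℕ)}
  have hBad : ∀ jk ∈ J, μ.real (Bad jk) ≤ Real.exp (-γ ^ 2 * n₀ / 2) := by
    rintro ⟨j, k⟩ hjk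
    simp only [J, mem_product, mem_Icc] at hjk
    have hγp : ∀ i, γ ≤ μ.real {ω | y i ω k = 1} := fun i ↦
      (hγ ▸ ciInf_le (Set.finite_range p).bddBelow k).trans_eq (hp i k).symm
    exact measureReal_prefix_sum_le_half_mul_le
      (hindep.comp (fun _ v ↦ v k) fun _ ↦ measurable_pi_apply k) (fun i ↦ (hmeas i).eval) (fun i ω ↦ h01 i ω k) hγpos.le hγp
      (Nat.le_mul_of_pos_left n₀ hjk.1.1)
      ((Nat.mul_le_mul_right n₀ hjk.1.2).trans (Nat.div_mul_le_self n n₀))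
  have hcard : #J ≤ m * n₀ := by
    simp only [J, card_product, Nat.card_Icc, add_tsub_cancel_right, card_univ, Fintype.card_fin]
    rw [mul_comm]
    exact Nat.mul_le_mul_left m (Nat.div_le_of_le_mul (by nlinarith))
  refine le_trans ?_ (one_sub_card_mul_le_measureReal J hBad fun ω hω t ht htn k ↦ ?_)
  · gcongr
    exact_mod_cast hcard
  · have hj : (t / n₀, k) ∈ J := by
      simp only [J, mem_product, mem_Icc, mem_univ, and_true]
      exact ⟨(Nat.one_le_div_iff hn₀pos).mpr ht.le, Nat.div_le_div_right htn⟩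
    have hfloor : γ / 2 * (t / n₀ * n₀ : ℕ) <
        ∑ i ∈ univ.filter (fun i : Fin n => (i : ℕ) < t / n₀ * n₀), y i ω k :=
      not_le.mp fun h ↦ hω (Set.mem_biUnion hj h)
    have hnonneg : ∀ i, 0 ≤ y i ω k := fun i ↦ by rcases h01 i ω k with h | h <;> simp [h]
    have := half_le_average_of_le_at_floor hnonneg (half_pos hγpos).le hn₀pos ht.le hfloor.le
    linarith

/-- Nice-sequence lemma: for i.i.d. random vectors `y₁, …, y_n` with values in `{0,1}^m`,
`p*_k = P(y_{1,k} = 1)` and `γ* = min_k p*_k > 0`, and `n₀` a positive integer dividing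
`n` with `n₀² ≥ n`, with probability at least `1 - m n₀ e^{-γ*² n₀ / 2}` the sequence is
`(n₀, γ*/4)`-nice: every running average `(1/t) Σ_{i≤t} y_{i,k}` with `n₀ < t ≤ n` is at
least `γ*/4`. -/
theorem nice_sequence_lemma
    {Ω : Type*} [MeasurableSpace Ω] (μ : Measure Ω) [IsProbabilityMeasure μ]
    (n m : ℕ) (hn : 0 < n) (hm : 0 < m)
    (y : Fin n → Ω → (Fin m → ℝ))
    (hmeas : ∀ i, Measurable (y i))
    (h01 : ∀ i ω k, y i ω k = 0 ∨ y i ω k = 1)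
    (hindep : iIndepFun y μ)
    (hident : ∀ i j : Fin n, Measure.map (y i) μ = Measure.map (y j) μ)
    (p : Fin m → ℝ)
    (hp : ∀ (i : Fin n) (k : Fin m), (μ {ω | y i ω k = 1}).toReal = p k)
    (γ : ℝ) (hγ : γ = ⨅ k, p k) (hγpos : 0 < γ)
    (n₀ : ℕ) (hn₀pos : 0 < n₀) (hn₀dvd : n₀ ∣ n) (hn₀sq : n ≤ n₀ ^ 2) :
    1 - (m : ℝ) * n₀ * Real.exp (-γ ^ 2 * n₀ / 2) ≤
      (μ {ω | ∀ t : ℕ, n₀ < t → t ≤ n → ∀ k : Fin m,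
        γ / 4 ≤ (1 / (t : ℝ)) * ∑ i ∈ Finset.univ.filter (fun i : Fin n => (i : ℕ) < t),
          y i ω k}).toReal :=
  nice_sequence_lemma_general μ n m y hmeas h01 hindep p hp γ hγ hγpos n₀ hn₀pos hn₀sq
end
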